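/- Let q be a bounded conservative Q-matrix on ℕ. Then every substochastic transition function P satisfying the backward integral equation for q is stochastic, i.e. ∑_j P t i j = 1 for all t ≥ 0 and all i; moreover any two substochastic transition functions satisfying the backward integral equation for q coincide. In particular q is regular. -/

import Mathlib

open scoped BigOperators
open Filter Topology

/-- Row `i` of `q` with the diagonal entry replaced by `0`
(used to form sums over the off-diagonal entries). -/
noncomputable def offDiag (q : ℕ → ℕ → ℝ) (i j : ℕ) : ℝ :=
  if j = i then 0 else q i j

/-- `q` is a (totally stable) Q-matrix on `ℕ`: nonnegative off-diagonal entries,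
nonpositive diagonal, and each row is summable off the diagonal with
`∑_{j ≠ i} q i j ≤ qᵢ := -q i i`. -/
def IsQMatrix (q : ℕ → ℕ → ℝ) : Prop :=
  (∀ i j, i ≠ j → 0 ≤ q i j) ∧
  (∀ i, q i i ≤ 0) ∧
  (∀ i, Summable (fun j => offDiag q i j)) ∧
  (∀ i, (∑' j, offDiag q i j) ≤ - q i i)

/-- A Q-matrix is conservative if each row sums to `0`:
`∑_{j ≠ i} q i j = qᵢ = -q i i`. -/
def IsConservative (q : ℕ → ℕ → ℝ) : Prop :=
  ∀ i, (∑' j, offDiag q i j) = - q i i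

/-- A Q-matrix is bounded if `sup_i qᵢ < ∞`. -/
def IsBoundedQ (q : ℕ → ℕ → ℝ) : Prop :=
  ∃ C : ℝ, ∀ i, - q i i ≤ C

/-- A substochastic transition function on `[0,∞)` (parametrized by `t : ℝ`,
with all conditions imposed for `t ≥ 0`). -/
def IsTransitionFunction (P : ℝ → ℕ → ℕ → ℝ) : Prop :=
  (∀ t i j, 0 ≤ t → 0 ≤ P t i j) ∧
  (∀ t i, 0 ≤ t → Summable (fun j => P t i j)) ∧
  (∀ t i, 0 ≤ t → (∑' j, P t i j) ≤ 1) ∧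
  (∀ i j, P 0 i j = if i = j then 1 else 0) ∧
  (∀ t s i j, 0 ≤ t → 0 ≤ s → P (t + s) i j = ∑' k, P t i k * P s k j)

/-- `P` satisfies the backward integral equation for the Q-matrix `q`:
`P t i j = δ_{ij} e^{-qᵢ t} + ∫_0^t e^{-qᵢ (t-s)} ∑_{k ≠ i} q i k P s k j ds`
(here `-qᵢ = q i i`). -/
def BackwardEq (q : ℕ → ℕ → ℝ) (P : ℝ → ℕ → ℕ → ℝ) : Prop :=
  ∀ t i j, 0 ≤ t →
    P t i j = (if i = j then 1 else 0) * Real.exp (q i i * t) +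
      ∫ s in (0:ℝ)..t,
        Real.exp (q i i * (t - s)) * (∑' k, if k = i then 0 else q i k * P s k j)

/-- `P` is the minimal Q-process for `q`: a substochastic transition function
satisfying the backward integral equation for `q`, which is pointwise below any
other such transition function. -/
def IsMinimalQProcess (q : ℕ → ℕ → ℝ) (P : ℝ → ℕ → ℕ → ℝ) : Prop :=
  IsTransitionFunction P ∧ BackwardEq q P ∧
  ∀ P', IsTransitionFunction P' → BackwardEq q P' →
    ∀ t i j, 0 ≤ t → P t i j ≤ P' t i j

/-- `q` is regular (`IsRegularQ` to avoid a name clash with Mathlib): conservative, and the minimal Q-process is honest (stochastic). -/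
def IsRegularQ (q : ℕ → ℕ → ℝ) : Prop :=
  IsConservative q ∧
  ∀ P, IsMinimalQProcess q P → ∀ t, 0 ≤ t → ∀ i, (∑' j, P t i j) = 1

/-- The tail sum `∑_{j ≥ k} f j`. -/
noncomputable def tailSum (f : ℕ → ℝ) (k : ℕ) : ℝ :=
  ∑' j, if k ≤ j then f j else 0

/-- Condition (1.1): stochastic comparability of `P1` and `P2`. -/
def Cond11 (P1 P2 : ℝ → ℕ → ℕ → ℝ) : Prop :=
  ∀ t, 0 ≤ t → ∀ k i m, i ≤ m → tailSum (P1 t i) k ≤ tailSum (P2 t m) k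

/-- Condition (1.2) for the Q-matrices `q1`, `q2`. -/
def Cond12 (q1 q2 : ℕ → ℕ → ℝ) : Prop :=
  ∀ i m, i ≤ m → ∀ k, (k ≤ i ∨ m + 1 ≤ k) →
    tailSum (q1 i) k ≤ tailSum (q2 m) k

/-- Condition (1.3) for the Q-matrices `q1`, `q2` (the conservative reduction
of (1.2)). -/
def Cond13 (q1 q2 : ℕ → ℕ → ℝ) : Prop :=
  ∀ i m, i ≤ m →
    (∀ k, m + 1 ≤ k → tailSum (q1 i) k ≤ tailSum (q2 m) k) ∧
    (∀ k, k + 1 ≤ i →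
      (∑ j ∈ Finset.range (k + 1), q2 m j) ≤ ∑ j ∈ Finset.range (k + 1), q1 i j)

/-! With `qᵢ ≤ C`, every solution has `P h i i ≥ e^{-C h}`, which together with
Chapman–Kolmogorov makes it `C`-Lipschitz in time. This continuity is what makes the backward
integrals genuine: the integral of a non-integrable function would be the junk value `0`.

Honesty: for `j ≠ i` the backward equation gives `P h i j ≥ q i j h e^{-C h}`, so by
conservativity the row sums satisfy `∑ⱼ P h i j ≥ e^{-qᵢ h} + qᵢ h e^{-C h} ≥ 1 - (C h)²`.
Chapman–Kolmogorov makes row-sum defects subadditive in time, hence the defect at time `t` is at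
most `n (C t / n)²` for every `n`, i.e. zero.

Uniqueness: the difference `D` of two solutions satisfies
`D t i j = ∫₀ᵗ e^{-qᵢ (t-s)} ∑_{k ≠ i} q i k D s k j ds`, so on `[0, t₀]` the supremum of `|D|`
is contracted by the factor `1 - e^{-C t₀} < 1`. -/

open Real

section WeightedSum

variable {ι : Type*} {w x : ι → ℝ} {M : ℝ}

theorem summable_mul_of_abs_le (hw0 : ∀ k, 0 ≤ w k) (hw : Summable w) (hx : ∀ k, |x k| ≤ M) :
    Summable fun k => w k * x k := by
  refine Summable.of_norm_bounded (E := ℝ) (hw.mul_right M) fun k => ?_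
  rw [Real.norm_eq_abs, abs_mul, abs_of_nonneg (hw0 k)]
  exact mul_le_mul_of_nonneg_left (hx k) (hw0 k)

theorem abs_tsum_mul_le (hw0 : ∀ k, 0 ≤ w k) (hw : Summable w) (hx : ∀ k, |x k| ≤ M) :
    |∑' k, w k * x k| ≤ (∑' k, w k) * M := by
  rw [← tsum_mul_right, ← Real.norm_eq_abs]
  refine tsum_of_norm_bounded (hw.mul_right M).hasSum fun k => ?_
  rw [Real.norm_eq_abs, abs_mul, abs_of_nonneg (hw0 k)]
  exact mul_le_mul_of_nonneg_left (hx k) (hw0 k)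

end WeightedSum

theorem integral_exp_mul_sub_mul_neg (c t : ℝ) :
    ∫ s in (0:ℝ)..t, exp (c * (t - s)) * -c = 1 - exp (c * t) := by
  have hderiv : ∀ s ∈ Set.uIcc 0 t,
      HasDerivAt (fun s => exp (c * (t - s))) (exp (c * (t - s)) * -c) s := fun s _ => by
    convert (((hasDerivAt_id' s).const_sub t).const_mul c).exp using 2
    ring
  rw [intervalIntegral.integral_eq_sub_of_hasDerivAt hderiv
    ((by fun_prop : Continuous fun s => exp (c * (t - s)) * -c).intervalIntegrable _ _)]
  simp

theorem abs_integral_exp_mul_le {c b t : ℝ} {g : ℝ → ℝ} (ht : 0 ≤ t)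
    (hg : ∀ s ∈ Set.Ioc 0 t, |g s| ≤ -c * b) :
    |∫ s in (0:ℝ)..t, exp (c * (t - s)) * g s| ≤ b * (1 - exp (c * t)) := by
  rw [← integral_exp_mul_sub_mul_neg, ← intervalIntegral.integral_const_mul, ← Real.norm_eq_abs]
  refine intervalIntegral.norm_integral_le_of_norm_le ht (.of_forall fun s hs => ?_)
    ((by fun_prop : Continuous fun s => b * (exp (c * (t - s)) * -c)).intervalIntegrable _ _)
  rw [Real.norm_eq_abs, abs_mul, abs_of_pos (exp_pos _)]
  nlinarith [hg s hs, exp_pos (c * (t - s))]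

theorem eq_zero_of_bound_contracts {α : Type*} {f : α → ℝ} {ρ M : ℝ} (hρ0 : 0 ≤ ρ) (hρ1 : ρ < 1)
    (hM : ∀ x, |f x| ≤ M) (hρ : ∀ b, (∀ x, |f x| ≤ b) → ∀ x, |f x| ≤ ρ * b) (x : α) :
    f x = 0 := by
  have hpow : ∀ n : ℕ, ∀ x, |f x| ≤ ρ ^ n * M := by
    intro n
    induction n with
    | zero => simpa using hM
    | succ n ih => simpa [pow_succ', mul_assoc] using hρ _ ih
  have hlim : Tendsto (fun n : ℕ => ρ ^ n * M) atTop (𝓝 0) := by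
    simpa using (tendsto_pow_atTop_nhds_zero_of_lt_one hρ0 hρ1).mul_const M
  exact abs_nonpos_iff.mp (ge_of_tendsto' hlim fun n => hpow n x)

noncomputable def jumpSum (q : ℕ → ℕ → ℝ) (i : ℕ) (f : ℕ → ℝ) : ℝ :=
  ∑' k, if k = i then 0 else q i k * f k

variable {q : ℕ → ℕ → ℝ} {P P' : ℝ → ℕ → ℕ → ℝ} {C : ℝ}

theorem jumpSum_eq_tsum_offDiag_mul (i : ℕ) (f : ℕ → ℝ) :
    jumpSum q i f = ∑' k, offDiag q i k * f k :=
  tsum_congr fun k => by unfold offDiag; split_ifs <;> simp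

namespace IsQMatrix

theorem nonneg_of_ne (hq : IsQMatrix q) {i j : ℕ} (hij : i ≠ j) : 0 ≤ q i j :=
  hq.1 i j hij

theorem diag_nonpos (hq : IsQMatrix q) (i : ℕ) : q i i ≤ 0 :=
  hq.2.1 i

theorem summable_offDiag (hq : IsQMatrix q) (i : ℕ) : Summable (offDiag q i) :=
  hq.2.2.1 i

theorem tsum_offDiag_le (hq : IsQMatrix q) (i : ℕ) : ∑' j, offDiag q i j ≤ -q i i :=
  hq.2.2.2 i

theorem offDiag_nonneg (hq : IsQMatrix q) (i k : ℕ) : 0 ≤ offDiag q i k := by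
  unfold offDiag
  split_ifs with hk
  · exact le_rfl
  · exact hq.nonneg_of_ne (Ne.symm hk)

theorem bound_nonneg (hq : IsQMatrix q) (hC : ∀ i, -q i i ≤ C) : 0 ≤ C :=
  (neg_nonneg.mpr (hq.diag_nonpos 0)).trans (hC 0)

theorem abs_jumpSum_le (hq : IsQMatrix q) {f : ℕ → ℝ} {M : ℝ} (hf : ∀ k, |f k| ≤ M) (i : ℕ) :
    |jumpSum q i f| ≤ -q i i * M := by
  have hM : 0 ≤ M := (abs_nonneg _).trans (hf 0)
  rw [jumpSum_eq_tsum_offDiag_mul]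
  exact (abs_tsum_mul_le (hq.offDiag_nonneg i) (hq.summable_offDiag i) hf).trans
    (mul_le_mul_of_nonneg_right (hq.tsum_offDiag_le i) hM)

theorem jumpSum_nonneg (hq : IsQMatrix q) {f : ℕ → ℝ} (hf : ∀ k, 0 ≤ f k) (i : ℕ) :
    0 ≤ jumpSum q i f := by
  rw [jumpSum_eq_tsum_offDiag_mul]
  exact tsum_nonneg fun k => mul_nonneg (hq.offDiag_nonneg i k) (hf k)

theorem mul_le_jumpSum (hq : IsQMatrix q) {f : ℕ → ℝ} {M : ℝ} (hf0 : ∀ k, 0 ≤ f k)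
    (hf : ∀ k, |f k| ≤ M) {i j : ℕ} (hji : j ≠ i) : q i j * f j ≤ jumpSum q i f := by
  rw [jumpSum_eq_tsum_offDiag_mul]
  calc q i j * f j = offDiag q i j * f j := by rw [offDiag, if_neg hji]
    _ ≤ _ := (summable_mul_of_abs_le (hq.offDiag_nonneg i) (hq.summable_offDiag i) hf).le_tsum j
      fun k _ => mul_nonneg (hq.offDiag_nonneg i k) (hf0 k)

theorem jumpSum_sub (hq : IsQMatrix q) {f g : ℕ → ℝ} {M : ℝ} (hf : ∀ k, |f k| ≤ M)
    (hg : ∀ k, |g k| ≤ M) (i : ℕ) :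
    jumpSum q i f - jumpSum q i g = jumpSum q i (f - g) := by
  simp only [jumpSum_eq_tsum_offDiag_mul, Pi.sub_apply, mul_sub]
  exact (Summable.tsum_sub (summable_mul_of_abs_le (hq.offDiag_nonneg i) (hq.summable_offDiag i) hf)
    (summable_mul_of_abs_le (hq.offDiag_nonneg i) (hq.summable_offDiag i) hg)).symm

theorem continuousOn_jumpSum (hq : IsQMatrix q) {f : ℕ → ℝ → ℝ} {s : Set ℝ} {M : ℝ}
    (hf : ∀ k, ContinuousOn (f k) s) (hM : ∀ k, ∀ x ∈ s, |f k x| ≤ M) (i : ℕ) :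
    ContinuousOn (fun x => jumpSum q i fun k => f k x) s := by
  simp only [jumpSum_eq_tsum_offDiag_mul]
  refine continuousOn_tsum (fun k => continuousOn_const.mul (hf k))
    ((hq.summable_offDiag i).mul_right M) fun k x hx => ?_
  rw [Real.norm_eq_abs, abs_mul, abs_of_nonneg (hq.offDiag_nonneg i k)]
  exact mul_le_mul_of_nonneg_left (hM k x hx) (hq.offDiag_nonneg i k)

end IsQMatrix

namespace IsTransitionFunction

variable {t s : ℝ}

theorem nonneg (hP : IsTransitionFunction P) (ht : 0 ≤ t) (i j : ℕ) : 0 ≤ P t i j :=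
  hP.1 t i j ht

theorem summable (hP : IsTransitionFunction P) (ht : 0 ≤ t) (i : ℕ) : Summable (P t i) :=
  hP.2.1 t i ht

theorem tsum_le_one (hP : IsTransitionFunction P) (ht : 0 ≤ t) (i : ℕ) : ∑' j, P t i j ≤ 1 :=
  hP.2.2.1 t i ht

theorem add_apply (hP : IsTransitionFunction P) (ht : 0 ≤ t) (hs : 0 ≤ s) (i j : ℕ) :
    P (t + s) i j = ∑' k, P t i k * P s k j :=
  hP.2.2.2.2 t s i j ht hs

theorem tsum_zero (hP : IsTransitionFunction P) (i : ℕ) : ∑' j, P 0 i j = 1 := by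
  simp_rw [hP.2.2.2.1 i, eq_comm (a := i)]
  exact tsum_ite_eq i (fun _ => (1 : ℝ))

theorem abs_tsum_le_one (hP : IsTransitionFunction P) (ht : 0 ≤ t) (i : ℕ) :
    |∑' j, P t i j| ≤ 1 :=
  abs_le.mpr ⟨(neg_one_lt_zero.trans_le (tsum_nonneg fun j => hP.nonneg ht i j)).le,
    hP.tsum_le_one ht i⟩

theorem abs_le_one (hP : IsTransitionFunction P) (ht : 0 ≤ t) (i j : ℕ) : |P t i j| ≤ 1 := by
  rw [abs_of_nonneg (hP.nonneg ht i j)]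
  exact ((hP.summable ht i).le_tsum j fun k _ => hP.nonneg ht i k).trans (hP.tsum_le_one ht i)

theorem le_one_sub_diag (hP : IsTransitionFunction P) (ht : 0 ≤ t) {k j : ℕ} (hjk : j ≠ k) :
    P t k j ≤ 1 - P t k k := by
  have h := (hP.summable ht k).sum_le_tsum {j, k} fun m _ => hP.nonneg ht k m
  rw [Finset.sum_pair hjk] at h
  linarith [hP.tsum_le_one ht k]

theorem abs_sub_ite_le (hP : IsTransitionFunction P) (ht : 0 ≤ t) (k j : ℕ) :
    |P t k j - if k = j then 1 else 0| ≤ 1 - P t k k := by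
  split_ifs with hkj
  · subst hkj
    rw [abs_sub_comm, abs_of_nonneg (by linarith [(abs_le.mp (hP.abs_le_one ht k k)).2])]
  · rw [sub_zero, abs_of_nonneg (hP.nonneg ht k j)]
    exact hP.le_one_sub_diag ht (Ne.symm hkj)

/-- `P (t + s) - P t = P t (P s - I)`, a row-substochastic average of rows of `P s - I`. -/
theorem abs_add_sub_le (hP : IsTransitionFunction P) (ht : 0 ≤ t) (hs : 0 ≤ s) {δ : ℝ}
    (hδ : ∀ k, 1 - P s k k ≤ δ) (i j : ℕ) : |P (t + s) i j - P t i j| ≤ δ := by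
  have hδ0 : 0 ≤ δ := by linarith [hδ 0, (abs_le.mp (hP.abs_le_one hs 0 0)).2]
  have hdiff : ∀ k, |P s k j - if k = j then 1 else 0| ≤ δ :=
    fun k => (hP.abs_sub_ite_le hs k j).trans (hδ k)
  have hrow : P t i j = ∑' k, P t i k * if k = j then 1 else 0 := by simp
  rw [hP.add_apply ht hs, hrow, ← Summable.tsum_sub
    (summable_mul_of_abs_le (hP.nonneg ht i) (hP.summable ht i) (hP.abs_le_one hs · j))
    (summable_mul_of_abs_le (hP.nonneg ht i) (hP.summable ht i) (M := 1) fun k => by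
      split_ifs <;> simp)]
  simp_rw [← mul_sub]
  exact (abs_tsum_mul_le (hP.nonneg ht i) (hP.summable ht i) hdiff).trans
    (mul_le_of_le_one_left hδ0 (hP.tsum_le_one ht i))

theorem tsum_add (hP : IsTransitionFunction P) (ht : 0 ≤ t) (hs : 0 ≤ s) (i : ℕ) :
    ∑' j, P (t + s) i j = ∑' k, P t i k * ∑' j, P s k j := by
  have hrow : ∀ k, Summable fun j => P t i k * P s k j :=
    fun k => (hP.summable hs k).mul_left _
  have hcol : ∀ j, Summable fun k => P t i k * P s k j :=
    fun j => summable_mul_of_abs_le (hP.nonneg ht i) (hP.summable ht i) (hP.abs_le_one hs · j)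
  have hrowsum : Summable fun k => ∑' j, P t i k * P s k j := by
    simp_rw [tsum_mul_left]
    exact summable_mul_of_abs_le (hP.nonneg ht i) (hP.summable ht i) (hP.abs_tsum_le_one hs)
  have hprod : Summable (Function.uncurry fun k j => P t i k * P s k j) :=
    (summable_prod_of_nonneg fun _ => mul_nonneg (hP.nonneg ht _ _) (hP.nonneg hs _ _)).mpr
      ⟨hrow, hrowsum⟩
  simp_rw [hP.add_apply ht hs, hprod.tsum_comm' hrow hcol, tsum_mul_left]

theorem one_sub_add_le_tsum_add (hP : IsTransitionFunction P) (ht : 0 ≤ t) (hs : 0 ≤ s)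
    {δ ε : ℝ} (hδ : ∀ k, 1 - δ ≤ ∑' j, P t k j) (hε : ∀ k, 1 - ε ≤ ∑' j, P s k j) (i : ℕ) :
    1 - (δ + ε) ≤ ∑' j, P (t + s) i j := by
  have hε0 : 0 ≤ ε := by linarith [hε 0, hP.tsum_le_one hs 0]
  have hlow : (∑' k, P t i k) * (1 - ε) ≤ ∑' k, P t i k * ∑' j, P s k j := by
    rw [← tsum_mul_right]
    exact Summable.tsum_le_tsum (fun k => mul_le_mul_of_nonneg_left (hε k) (hP.nonneg ht i k))
      ((hP.summable ht i).mul_right _)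
      (summable_mul_of_abs_le (hP.nonneg ht i) (hP.summable ht i) (hP.abs_tsum_le_one hs))
  rw [hP.tsum_add ht hs]
  nlinarith [hδ i, hP.tsum_le_one ht i]

theorem one_sub_mul_le_tsum_mul (hP : IsTransitionFunction P) {h ε : ℝ} (hh : 0 ≤ h)
    (hε : ∀ k, 1 - ε ≤ ∑' j, P h k j) (n : ℕ) (i : ℕ) :
    1 - n * ε ≤ ∑' j, P (n * h) i j := by
  induction n generalizing i with
  | zero => simp [hP.tsum_zero]
  | succ n ih =>
    have := hP.one_sub_add_le_tsum_add (by positivity) hh ih hε i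
    rwa [Nat.cast_succ, add_one_mul, add_one_mul]

end IsTransitionFunction

namespace BackwardEq

variable {t h : ℝ}

theorem apply (hBE : BackwardEq q P) (ht : 0 ≤ t) (i j : ℕ) :
    P t i j = (if i = j then 1 else 0) * exp (q i i * t) +
      ∫ s in (0:ℝ)..t, exp (q i i * (t - s)) * jumpSum q i fun k => P s k j :=
  hBE t i j ht

theorem exp_le_diag (hq : IsQMatrix q) (hP : IsTransitionFunction P) (hBE : BackwardEq q P)
    (ht : 0 ≤ t) (i : ℕ) : exp (q i i * t) ≤ P t i i := by
  rw [hBE.apply ht, if_pos rfl, one_mul, le_add_iff_nonneg_right]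
  exact intervalIntegral.integral_nonneg ht fun s hs =>
    mul_nonneg (exp_pos _).le (hq.jumpSum_nonneg (fun k => hP.nonneg hs.1 k i) i)

theorem exp_neg_le_diag (hq : IsQMatrix q) (hC : ∀ i, -q i i ≤ C) (hP : IsTransitionFunction P)
    (hBE : BackwardEq q P) (ht : 0 ≤ t) (i : ℕ) : exp (-(C * t)) ≤ P t i i :=
  (exp_le_exp.mpr (by nlinarith [hC i])).trans (hBE.exp_le_diag hq hP ht i)

theorem lipschitzOnWith (hq : IsQMatrix q) (hC : ∀ i, -q i i ≤ C) (hP : IsTransitionFunction P)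
    (hBE : BackwardEq q P) (i j : ℕ) :
    LipschitzOnWith C.toNNReal (fun t => P t i j) (Set.Ici 0) := by
  refine LipschitzOnWith.of_dist_le_mul fun x hx y hy => ?_
  wlog hxy : x ≤ y generalizing x y
  · rw [dist_comm, dist_comm x]
    exact this y hy x hx (le_of_not_ge hxy)
  obtain ⟨ε, hε, rfl⟩ : ∃ ε, 0 ≤ ε ∧ y = x + ε := ⟨y - x, sub_nonneg.mpr hxy, by ring⟩
  rw [dist_comm, dist_comm x, Real.dist_eq, Real.dist_eq, add_sub_cancel_left, abs_of_nonneg hε,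
    Real.coe_toNNReal C (hq.bound_nonneg hC)]
  refine (hP.abs_add_sub_le (δ := 1 - exp (-(C * ε))) hx hε (fun k => ?_) i j).trans ?_
  · exact sub_le_sub_left (hBE.exp_neg_le_diag hq hC hP hε k) 1
  · linarith [add_one_le_exp (-(C * ε))]

theorem intervalIntegrable_integrand (hq : IsQMatrix q) (hC : ∀ i, -q i i ≤ C)
    (hP : IsTransitionFunction P) (hBE : BackwardEq q P) (ht : 0 ≤ t) (i j : ℕ) :
    IntervalIntegrable (fun s => exp (q i i * (t - s)) * jumpSum q i fun k => P s k j)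
      MeasureTheory.volume 0 t := by
  have hsub : Set.uIcc 0 t ⊆ Set.Ici 0 := by
    rw [Set.uIcc_of_le ht]
    exact Set.Icc_subset_Ici_self
  refine ContinuousOn.intervalIntegrable <|
    (by fun_prop : Continuous fun s => exp (q i i * (t - s))).continuousOn.mul ?_
  exact hq.continuousOn_jumpSum
    (fun k => ((hBE.lipschitzOnWith hq hC hP k j).continuousOn).mono hsub)
    (fun k s hs => hP.abs_le_one (hsub hs) k j) i

theorem sub_eq_integral (hq : IsQMatrix q) (hC : ∀ i, -q i i ≤ C) (hP : IsTransitionFunction P)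
    (hBE : BackwardEq q P) (hP' : IsTransitionFunction P') (hBE' : BackwardEq q P')
    (ht : 0 ≤ t) (i j : ℕ) :
    P t i j - P' t i j =
      ∫ s in (0:ℝ)..t, exp (q i i * (t - s)) * jumpSum q i fun k => P s k j - P' s k j := by
  rw [hBE.apply ht, hBE'.apply ht, add_sub_add_left_eq_sub,
    ← intervalIntegral.integral_sub (hBE.intervalIntegrable_integrand hq hC hP ht i j)
      (hBE'.intervalIntegrable_integrand hq hC hP' ht i j)]
  refine intervalIntegral.integral_congr fun s hs => ?_
  rw [Set.uIcc_of_le ht] at hs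
  simp only [← mul_sub]
  rw [hq.jumpSum_sub (hP.abs_le_one hs.1 · j) (hP'.abs_le_one hs.1 · j)]
  rfl

theorem abs_sub_le_mul (hq : IsQMatrix q) (hC : ∀ i, -q i i ≤ C) (hP : IsTransitionFunction P)
    (hBE : BackwardEq q P) (hP' : IsTransitionFunction P') (hBE' : BackwardEq q P')
    {t₀ b : ℝ} {j : ℕ} (hb : ∀ s ∈ Set.Icc 0 t₀, ∀ k, |P s k j - P' s k j| ≤ b)
    (ht : t ∈ Set.Icc 0 t₀) (i : ℕ) :
    |P t i j - P' t i j| ≤ (1 - exp (-(C * t₀))) * b := by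
  have hb0 : 0 ≤ b := (abs_nonneg _).trans (hb t ht i)
  rw [hBE.sub_eq_integral hq hC hP hP' hBE' ht.1]
  calc _ ≤ b * (1 - exp (q i i * t)) := abs_integral_exp_mul_le ht.1 fun s hs =>
          hq.abs_jumpSum_le (hb s ⟨hs.1.le, hs.2.trans ht.2⟩) i
    _ ≤ (1 - exp (-(C * t₀))) * b := by
        rw [mul_comm]
        gcongr
        nlinarith [hC i, hq.bound_nonneg hC, ht.1, ht.2]

theorem unique (hq : IsQMatrix q) (hC : ∀ i, -q i i ≤ C)
    (hP : IsTransitionFunction P) (hBE : BackwardEq q P) (hP' : IsTransitionFunction P')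
    (hBE' : BackwardEq q P') (ht : 0 ≤ t) (i j : ℕ) : P t i j = P' t i j := by
  have hρ0 : 0 ≤ 1 - exp (-(C * t)) :=
    sub_nonneg.mpr (exp_le_one_iff.mpr (by nlinarith [hq.bound_nonneg hC]))
  have hρ1 : 1 - exp (-(C * t)) < 1 := sub_lt_self _ (exp_pos _)
  have hbdd : ∀ x : Set.Icc 0 t × ℕ, |P x.1 x.2 j - P' x.1 x.2 j| ≤ 2 := fun x =>
    (abs_sub _ _).trans (by linarith [hP.abs_le_one x.1.2.1 x.2 j, hP'.abs_le_one x.1.2.1 x.2 j])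
  refine sub_eq_zero.mp <| eq_zero_of_bound_contracts hρ0 hρ1 hbdd (fun b hb x => ?_)
    (⟨t, ht, le_rfl⟩, i)
  exact hBE.abs_sub_le_mul hq hC hP hP' hBE' (fun s hs k => hb (⟨s, hs⟩, k)) x.1.2 x.2

theorem mul_exp_le_of_ne (hq : IsQMatrix q) (hC : ∀ i, -q i i ≤ C)
    (hP : IsTransitionFunction P) (hBE : BackwardEq q P) (hh : 0 ≤ h) {i j : ℕ} (hji : j ≠ i) :
    q i j * h * exp (-(C * h)) ≤ P h i j := by
  rw [hBE.apply hh, if_neg (Ne.symm hji), zero_mul, zero_add]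
  calc q i j * h * exp (-(C * h)) = ∫ _ in (0:ℝ)..h, q i j * exp (-(C * h)) := by simp; ring
    _ ≤ _ := intervalIntegral.integral_mono_on hh intervalIntegrable_const
        (hBE.intervalIntegrable_integrand hq hC hP hh i j) fun s hs => ?_
  have hqij : 0 ≤ q i j := hq.nonneg_of_ne (Ne.symm hji)
  calc q i j * exp (-(C * h)) = exp (-(C * (h - s))) * (q i j * exp (-(C * s))) := by
        rw [mul_left_comm, ← exp_add]
        ring_nf
    _ ≤ exp (q i i * (h - s)) * (q i j * P s j j) := by
        gcongr
        · nlinarith [hC i, hs.2]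
        · exact hBE.exp_neg_le_diag hq hC hP hs.1 j
    _ ≤ _ := by
        gcongr
        exact hq.mul_le_jumpSum (fun k => hP.nonneg hs.1 k j) (hP.abs_le_one hs.1 · j) hji

theorem one_sub_sq_le_tsum (hq : IsQMatrix q) (hcons : IsConservative q) (hC : ∀ i, -q i i ≤ C)
    (hP : IsTransitionFunction P) (hBE : BackwardEq q P) (hh : 0 ≤ h) (i : ℕ) :
    1 - (C * h) ^ 2 ≤ ∑' j, P h i j := by
  have hsum : Summable fun j => if j = i then 0 else P h i j :=
    .of_norm_bounded (hP.summable hh i) fun j => by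
      split_ifs <;> simp [abs_of_nonneg, hP.nonneg hh i j]
  have hoff : -q i i * (h * exp (-(C * h))) ≤ ∑' j, if j = i then 0 else P h i j := by
    rw [← hcons i, ← tsum_mul_right]
    refine Summable.tsum_le_tsum (fun j => ?_) ((hq.summable_offDiag i).mul_right _) hsum
    unfold offDiag
    split_ifs with hj
    · simp
    · rw [← mul_assoc]
      exact hBE.mul_exp_le_of_ne hq hC hP hh hj
  have hqi : 0 ≤ -q i i := neg_nonneg.mpr (hq.diag_nonpos i)
  rw [(hP.summable hh i).tsum_eq_add_tsum_ite i]
  nlinarith [hBE.exp_le_diag hq hP hh i, add_one_le_exp (q i i * h),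
    mul_le_mul_of_nonneg_left (add_one_le_exp (-(C * h))) (mul_nonneg hqi hh),
    mul_nonneg (mul_nonneg (sub_nonneg.mpr (hC i)) (hq.bound_nonneg hC)) (sq_nonneg h)]

theorem tsum_eq_one (hq : IsQMatrix q) (hcons : IsConservative q) (hC : ∀ i, -q i i ≤ C)
    (hP : IsTransitionFunction P) (hBE : BackwardEq q P) (ht : 0 ≤ t) (i : ℕ) :
    ∑' j, P t i j = 1 := by
  have hbound : ∀ n : ℕ, 0 < n → 1 - (C * t) ^ 2 / n ≤ ∑' j, P t i j := by
    intro n hn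
    have hn' : (n : ℝ) ≠ 0 := by positivity
    have hstep : 0 ≤ t / n := div_nonneg ht n.cast_nonneg
    have := hP.one_sub_mul_le_tsum_mul hstep
      (fun k => hBE.one_sub_sq_le_tsum hq hcons hC hP hstep k) n i
    rwa [mul_div_cancel₀ t hn', show (n : ℝ) * (C * (t / n)) ^ 2 = (C * t) ^ 2 / n by
      field_simp] at this
  have hlim : Tendsto (fun n : ℕ => 1 - (C * t) ^ 2 / n) atTop (𝓝 1) := by
    simpa using tendsto_const_nhds.sub (tendsto_const_div_atTop_nhds_zero_nat ((C * t) ^ 2))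
  exact le_antisymm (hP.tsum_le_one ht i) (le_of_tendsto hlim (eventually_atTop.mpr ⟨1, hbound⟩))

end BackwardEq

/-- a bounded conservative Q-matrix has a unique Q-process, which is
honest; in particular such a Q-matrix is regular. -/
theorem statement8 (q : ℕ → ℕ → ℝ) (hq : IsQMatrix q)
    (hcons : IsConservative q) (hbdd : IsBoundedQ q) :
    (∀ P : ℝ → ℕ → ℕ → ℝ, IsTransitionFunction P → BackwardEq q P →
      ∀ t : ℝ, 0 ≤ t → ∀ i : ℕ, (∑' j, P t i j) = 1) ∧
    (∀ P P' : ℝ → ℕ → ℕ → ℝ, IsTransitionFunction P → BackwardEq q P →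
      IsTransitionFunction P' → BackwardEq q P' →
      ∀ t : ℝ, 0 ≤ t → ∀ i j : ℕ, P t i j = P' t i j) ∧
    IsRegularQ q := by
  obtain ⟨C, hC⟩ := hbdd
  have honest : ∀ P : ℝ → ℕ → ℕ → ℝ, IsTransitionFunction P → BackwardEq q P →
      ∀ t : ℝ, 0 ≤ t → ∀ i : ℕ, (∑' j, P t i j) = 1 :=
    fun P hP hBE t ht i => hBE.tsum_eq_one hq hcons hC hP ht i
  exact ⟨honest,
    fun P P' hP hBE hP' hBE' t ht i j => hBE.unique hq hC hP hP' hBE' ht i j,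
    hcons, fun P hmin => honest P hmin.1 hmin.2.1⟩
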